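/- Let α ≥ 1/2, β = √((α+4)/α), b_α = √(1+α(1−β)/2), ρ_k = α^α b_α^{4k+2α}, and 𝔏_k(s) = β^{α/2} e^{(1−β)s/2} ℒ_k^{(α−1)}(βs). Then for each k ∈ ℕ₀, ∫_0^∞ t e^{−t/α} 𝔏_k(t) dP₀(t) = ((α)_k/k!)^{1/2} α² β^{α/2} ρ_k (b_α² − kβ). -/

import Mathlib

open MeasureTheory Real Set

/-!
Expanding the Laguerre polynomial in monomials, every term is a Gamma integral
`∫ t^(α+j) e^(-ct) dt = Γ(α+j+1) / c^(α+j+1)`, and `Γ(α+j+1) = (α+j) Γ(α+j)` turns the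
resulting sum into `Σ_j C(k,j) (α+j) y^j = α(1+y)^k + k y (1+y)^(k-1)` with `y = -β/c`.
Weight, tilt and `P₀`-density combine into the rate `c = 1/α + (1+β)/2`, and the choice of `β`
(`αβ² = α + 4`) makes `1/c = α b²` and `1 - β/c = b⁴`, which is the stated closed form.
-/

/-- The generalized Laguerre polynomial `L_n^{(α−1)}(x) = Σ_{k=0}^n ((α+k)_{n−k}/(n−k)!) (−x)^k/k!`. -/
noncomputable def laguerre (α : ℝ) (n : ℕ) (x : ℝ) : ℝ :=
  ∑ k ∈ Finset.range (n + 1),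
    (Real.Gamma (α + n) / Real.Gamma (α + k)) / (Nat.factorial (n - k) : ℝ) *
      (-x) ^ k / (Nat.factorial k : ℝ)

/-- The normalized generalized Laguerre polynomial `ℒ_n^{(α−1)} = √(n!/(α)_n) L_n^{(α−1)}`. -/
noncomputable def laguerreN (α : ℝ) (n : ℕ) (x : ℝ) : ℝ :=
  Real.sqrt ((Nat.factorial n : ℝ) / (Real.Gamma (α + n) / Real.Gamma α)) * laguerre α n x

section BinomialSums

variable {R : Type*} [CommRing R]

theorem sum_range_choose_mul_pow (x : R) (k : ℕ) :
    ∑ j ∈ Finset.range (k + 1), (k.choose j : R) * x ^ j = (1 + x) ^ k := by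
  rw [add_comm (1 : R) x, add_pow]
  simp only [one_pow, mul_one, mul_comm]

theorem sum_range_mul_choose_mul_pow (x : R) (k : ℕ) :
    ∑ j ∈ Finset.range (k + 1), (j : R) * k.choose j * x ^ j = k * x * (1 + x) ^ (k - 1) := by
  cases k with
  | zero => simp
  | succ n =>
    rw [Finset.sum_range_succ', Nat.add_sub_cancel, ← sum_range_choose_mul_pow, Finset.mul_sum]
    simp only [Nat.cast_zero, zero_mul, add_zero]
    refine Finset.sum_congr rfl fun j _ => ?_
    have h := congrArg (Nat.cast : ℕ → R) (Nat.add_one_mul_choose_eq n j)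
    push_cast at h ⊢
    linear_combination (-x ^ (j + 1)) * h

theorem sum_range_choose_mul_add_mul_pow (a x : R) (k : ℕ) :
    ∑ j ∈ Finset.range (k + 1), (k.choose j : R) * (a + j) * x ^ j
      = a * (1 + x) ^ k + k * x * (1 + x) ^ (k - 1) := by
  rw [← sum_range_choose_mul_pow, ← sum_range_mul_choose_mul_pow, Finset.mul_sum,
    ← Finset.sum_add_distrib]
  exact Finset.sum_congr rfl fun j _ => by ring

end BinomialSums

theorem integrableOn_rpow_mul_exp_neg_mul_mul_pow {s c : ℝ} (hs : -1 < s) (hc : 0 < c)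
    (l : ℝ) (j : ℕ) :
    IntegrableOn (fun x : ℝ => x ^ s * exp (-(c * x)) * (l * x) ^ j) (Ioi 0) := by
  have hsj : -1 < s + j := by linarith [(j.cast_nonneg : (0 : ℝ) ≤ j)]
  have h := integrableOn_rpow_mul_exp_neg_mul_rpow (p := 1) hsj one_pos hc
  refine IntegrableOn.congr_fun (h.const_mul (l ^ j)) (fun x (hx : 0 < x) => ?_) measurableSet_Ioi
  rw [rpow_one, rpow_add hx, rpow_natCast, mul_pow, neg_mul]
  ring

theorem integral_rpow_mul_exp_neg_mul_mul_pow {s c : ℝ} (hs : -1 < s) (hc : 0 < c)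
    (l : ℝ) (j : ℕ) :
    ∫ x in Ioi 0, x ^ s * exp (-(c * x)) * (l * x) ^ j
      = Gamma (s + j + 1) * (1 / c) ^ (s + 1) * (l / c) ^ j := by
  have hsj : 0 < s + j + 1 := by linarith [(j.cast_nonneg : (0 : ℝ) ≤ j)]
  calc ∫ x in Ioi 0, x ^ s * exp (-(c * x)) * (l * x) ^ j
      = ∫ x in Ioi 0, l ^ j * (x ^ (s + j + 1 - 1) * exp (-(c * x))) := by
        refine setIntegral_congr_fun measurableSet_Ioi fun x (hx : 0 < x) => ?_
        rw [add_sub_cancel_right, rpow_add hx, rpow_natCast, mul_pow]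
        ring
    _ = Gamma (s + j + 1) * (1 / c) ^ (s + 1) * (l / c) ^ j := by
        rw [integral_const_mul, integral_rpow_mul_exp_neg_mul_Ioi hsj hc, add_right_comm,
          rpow_add (by positivity), rpow_natCast, div_pow l, one_div_pow]
        ring

theorem laguerre_coeff_mul_Gamma_add_one {α : ℝ} (hα : 0 < α) {j k : ℕ} (hjk : j ≤ k) :
    (Gamma (α + k) / Gamma (α + j)) / (k - j).factorial / j.factorial * Gamma (α + j + 1)
      = Gamma (α + k) / k.factorial * (k.choose j * (α + j)) := by
  have hΓ : Gamma (α + j) ≠ 0 := (Gamma_pos_of_pos (by positivity)).ne'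
  rw [Gamma_add_one (by positivity), Nat.cast_choose ℝ hjk]
  field_simp

/-- At `k = 0` the truncated exponent `k - 1` is harmless: its term carries the factor `k`. -/
theorem integral_rpow_mul_exp_neg_mul_laguerre {α c : ℝ} (hα : 0 < α) (hc : 0 < c)
    (l : ℝ) (k : ℕ) :
    ∫ x in Ioi 0, x ^ α * exp (-(c * x)) * laguerre α k (l * x)
      = Gamma (α + k) / k.factorial * (1 / c) ^ (α + 1)
          * (α * (1 - l / c) ^ k - k * (l / c) * (1 - l / c) ^ (k - 1)) := by
  have hα1 : -1 < α := by linarith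
  have hexpand : ∀ x, x ^ α * exp (-(c * x)) * laguerre α k (l * x)
      = ∑ j ∈ Finset.range (k + 1), (Gamma (α + k) / Gamma (α + j)) / (k - j).factorial
          / j.factorial * (x ^ α * exp (-(c * x)) * (-l * x) ^ j) := fun x => by
    simp only [laguerre, Finset.mul_sum]
    exact Finset.sum_congr rfl fun j _ => by ring
  have hterm : ∀ j ∈ Finset.range (k + 1),
      ∫ x in Ioi 0, (Gamma (α + k) / Gamma (α + j)) / (k - j).factorial / j.factorial
          * (x ^ α * exp (-(c * x)) * (-l * x) ^ j)
        = Gamma (α + k) / k.factorial * (1 / c) ^ (α + 1)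
          * (k.choose j * (α + j) * (-(l / c)) ^ j) := fun j hj => by
    rw [integral_const_mul, integral_rpow_mul_exp_neg_mul_mul_pow hα1 hc, ← mul_assoc,
      ← mul_assoc, laguerre_coeff_mul_Gamma_add_one hα (Finset.mem_range_succ_iff.mp hj),
      neg_div]
    ring
  simp_rw [hexpand]
  rw [integral_finsetSum _ fun j _ =>
      (integrableOn_rpow_mul_exp_neg_mul_mul_pow hα1 hc (-l) j).const_mul _,
    Finset.sum_congr rfl hterm, ← Finset.mul_sum, sum_range_choose_mul_add_mul_pow,
    ← sub_eq_add_neg]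
  ring

theorem sqrt_div_mul_div (p q : ℝ) : √(q / p) * (p / q) = √(p / q) := by
  rw [← inv_div p q, sqrt_inv, inv_mul_eq_div, div_sqrt]

theorem integral_rpow_mul_exp_neg_mul_laguerreN {α c : ℝ} (hα : 0 < α) (hc : 0 < c)
    (l : ℝ) (k : ℕ) :
    ∫ x in Ioi 0, x ^ α * exp (-(c * x)) * laguerreN α k (l * x)
      = Gamma α * √((Gamma (α + k) / Gamma α) / k.factorial) * (1 / c) ^ (α + 1)
          * (α * (1 - l / c) ^ k - k * (l / c) * (1 - l / c) ^ (k - 1)) := by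
  simp only [laguerreN, mul_left_comm _ (√_)]
  rw [integral_const_mul, integral_rpow_mul_exp_neg_mul_laguerre hα hc,
    ← sqrt_div_mul_div (Gamma (α + k) / Gamma α) k.factorial]
  field_simp

theorem mul_sq_eq_of_eq_sqrt {α β : ℝ} (hα : 0 < α) (hβ : β = √((α + 4) / α)) :
    α * β ^ 2 = α + 4 := by
  rw [hβ, sq_sqrt (by positivity)]
  field_simp

theorem one_add_mul_one_sub_div_two_pos {α β : ℝ} (hα : 0 < α)
    (hβ : β = √((α + 4) / α)) :
    0 < 1 + α * (1 - β) / 2 := by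
  have hβ0 : 0 < β := hβ ▸ sqrt_pos.mpr (by positivity)
  nlinarith [mul_sq_eq_of_eq_sqrt hα hβ, mul_pos hα hβ0]

theorem one_div_rate_eq {α β b : ℝ} (hα : 0 < α) (hβ : β = √((α + 4) / α))
    (hb : b ^ 2 = 1 + α * (1 - β) / 2) :
    1 / (1 / α + (1 + β) / 2) = α * b ^ 2 := by
  have hβ0 : 0 < β := hβ ▸ sqrt_pos.mpr (by positivity)
  rw [hb]
  field_simp
  linear_combination α * mul_sq_eq_of_eq_sqrt hα hβ

theorem one_sub_div_rate_eq {α β b : ℝ} (hα : 0 < α) (hβ : β = √((α + 4) / α))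
    (hb : b ^ 2 = 1 + α * (1 - β) / 2) :
    1 - β / (1 / α + (1 + β) / 2) = b ^ 4 := by
  rw [div_eq_mul_one_div β, one_div_rate_eq hα hβ hb, show b ^ 4 = (b ^ 2) ^ 2 by ring, hb]
  linear_combination (α / 4) * mul_sq_eq_of_eq_sqrt hα hβ

theorem mul_sq_rpow_add_one_mul_sub {α b : ℝ} (hα : 0 < α) (hb : 0 < b) (β : ℝ) (k : ℕ) :
    (α * b ^ 2) ^ (α + 1) * (α * (b ^ 4) ^ k - k * (β * (α * b ^ 2)) * (b ^ 4) ^ (k - 1))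
      = α ^ 2 * (α ^ α * b ^ (4 * (k : ℝ) + 2 * α)) * (b ^ 2 - k * β) := by
  have hpow : (α * b ^ 2) ^ (α + 1) = α ^ α * b ^ (2 * α) * (α * b ^ 2) := by
    rw [rpow_add_one (by positivity), mul_rpow hα.le (by positivity), ← rpow_natCast b 2,
      ← rpow_mul hb.le]
    norm_num
  have hb4k : b ^ (4 * (k : ℝ) + 2 * α) = (b ^ 4) ^ k * b ^ (2 * α) := by
    rw [rpow_add hb, rpow_mul hb.le, rpow_natCast, rpow_ofNat]
  have hpred : (k : ℝ) * (b ^ 4) ^ (k - 1) * b ^ 4 = k * (b ^ 4) ^ k := by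
    rcases k.eq_zero_or_pos with rfl | hk
    · simp
    · rw [mul_assoc, pow_sub_one_mul hk.ne']
  rw [hpow, hb4k]
  linear_combination (-(α ^ α * b ^ (2 * α) * α ^ 2 * β)) * hpred

/-- With `β = √((α+4)/α)`, `b = √(1+α(1−β)/2)`, `ρ_k = α^α b^{4k+2α}`, and
`𝔏_k(s) = β^{α/2} e^{(1−β)s/2} ℒ_k^{(α−1)}(βs)`:
`∫₀^∞ t e^{−t/α} 𝔏_k(t) dP₀(t) = ((α)_k/k!)^{1/2} α² β^{α/2} ρ_k (b² − kβ)`. -/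
theorem laguerre_texp_inner_product (α β b ρ : ℝ) (k : ℕ) (hα : 1/2 ≤ α)
    (hβ : β = Real.sqrt ((α + 4) / α))
    (hb : b = Real.sqrt (1 + α * (1 - β) / 2))
    (hρ : ρ = α ^ α * b ^ (4 * (k : ℝ) + 2 * α)) :
    ∫ t in Ioi (0 : ℝ),
        t * Real.exp (-t / α) *
          (β ^ (α / 2) * Real.exp ((1 - β) * t / 2) * laguerreN α k (β * t)) *
          (t ^ (α - 1) * Real.exp (-t) / Real.Gamma α)
      = Real.sqrt ((Real.Gamma (α + k) / Real.Gamma α) / (Nat.factorial k : ℝ)) *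
          α ^ 2 * β ^ (α / 2) * ρ * (b ^ 2 - k * β) := by
  have hα0 : 0 < α := by linarith
  have hβ0 : 0 < β := hβ ▸ sqrt_pos.mpr (by positivity)
  have hb2_pos := one_add_mul_one_sub_div_two_pos hα0 hβ
  have hb2 : b ^ 2 = 1 + α * (1 - β) / 2 := hb ▸ sq_sqrt hb2_pos.le
  have hb0 : 0 < b := hb ▸ sqrt_pos.mpr hb2_pos
  set c := 1 / α + (1 + β) / 2 with hc
  have hc0 : 0 < c := by positivity
  calc _ = β ^ (α / 2) / Gamma α
          * ∫ t in Ioi 0, t ^ α * exp (-(c * t)) * laguerreN α k (β * t) := by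
        rw [← integral_const_mul]
        refine setIntegral_congr_fun measurableSet_Ioi fun t (ht : 0 < t) => ?_
        have hexp : exp (-(c * t)) = exp (-t / α) * exp ((1 - β) * t / 2) * exp (-t) := by
          rw [← exp_add, ← exp_add, hc]
          ring_nf
        rw [hexp, rpow_sub_one ht.ne']
        field_simp
    _ = _ := by
        rw [integral_rpow_mul_exp_neg_mul_laguerreN hα0 hc0, one_sub_div_rate_eq hα0 hβ hb2,
          div_eq_mul_one_div β c, one_div_rate_eq hα0 hβ hb2,
          mul_assoc _ ((α * b ^ 2) ^ (α + 1)), mul_sq_rpow_add_one_mul_sub hα0 hb0, hρ]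
        field_simp
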